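/- Let (y, z, θ) solve the translator system with μ = 0, λ ≠ 0 and f(θ₀) ≠ 0, where f(θ) = −(θ − θ₀ + λ)·sin θ. Then z is bounded from below on ℝ; moreover z(s) → +∞ as s → +∞ if and only if θ(s) → θ₀ − λ as s → +∞, and if this fails then z(s) converges to a finite limit as s → +∞. The same dichotomy holds as s → −∞. -/

import Mathlib

/-!
For `μ = 0` the quantity `θ - λ e^{-z}` is a first integral, so `θ = θ₀ - λ + λ e^{-z}` and
`θ → θ₀ - λ` exactly when `z → +∞`. Since `(sin θ)' = (-λ e^{-z} cos θ) sin θ` is a linear equation,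
`sin θ` keeps the sign of `sin θ₀ ≠ 0`: hence `z' = sin θ` makes `z` monotone, and `θ` never leaves
the strip `kπ < θ < (k + 1)π` containing `θ₀`. Through the first integral, `|θ - θ₀| < π` bounds
`λ e^{-z}`, so `z` is bounded below, and a monotone function bounded below either tends to `+∞`
or converges.
-/

open Real Filter Topology Set

theorem eq_mul_exp_integral_of_hasDerivAt {u a : ℝ → ℝ} (ha : Continuous a)
    (hu : ∀ s, HasDerivAt u (a s * u s) s) (s : ℝ) :
    u s = u 0 * exp (∫ t in (0 : ℝ)..s, a t) := by
  set A : ℝ → ℝ := fun s => ∫ t in (0 : ℝ)..s, a t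
  have hA : ∀ s, HasDerivAt A (a s) s := fun s => (ha.integral_hasStrictDerivAt 0 s).hasDerivAt
  have hconst : ∀ s, HasDerivAt (fun t => u t * exp (-A t)) 0 s := fun s => by
    refine ((hu s).mul ((hA s).fun_neg.exp)).congr_deriv ?_
    ring
  have h := is_const_of_deriv_eq_zero (fun t => (hconst t).differentiableAt)
    (fun t => (hconst t).deriv) s 0
  have hA0 : A 0 = 0 := intervalIntegral.integral_same
  simp only [hA0, neg_zero, exp_zero, mul_one] at h
  rw [← h, mul_assoc, ← exp_add, neg_add_cancel, exp_zero, mul_one]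

theorem abs_sub_lt_pi_of_sin_ne_zero {f : ℝ → ℝ} (hf : Continuous f) (h : ∀ s, sin (f s) ≠ 0)
    (s t : ℝ) : |f s - f t| < π := by
  wlog hle : f t ≤ f s generalizing s t
  · rw [abs_sub_comm]
    exact this t s (le_of_not_ge hle)
  rw [abs_of_nonneg (sub_nonneg.mpr hle)]
  by_contra! hπ
  -- `⌈f t / π⌉ π` is a zero of `sin` in `[f t, f t + π] ⊆ [f t, f s]`.
  set k : ℤ := ⌈f t / π⌉
  have hk_ge : f t ≤ k * π := (div_le_iff₀ pi_pos).mp (Int.le_ceil _)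
  have hk_lt : k * π < f t + π := by
    rw [← lt_div_iff₀ pi_pos, add_div, div_self pi_ne_zero]
    exact Int.ceil_lt_add_one _
  obtain ⟨r, hr⟩ := intermediate_value_univ t s hf ⟨hk_ge, by linarith⟩
  exact h r (hr ▸ sin_int_mul_pi k)

theorem tendsto_atTop_or_exists_tendsto_nhds_of_bddBelow {ι α : Type*} [Preorder ι]
    [TopologicalSpace α] [ConditionallyCompleteLinearOrder α] [OrderTopology α] {f : ι → α}
    (hf : Monotone f ∨ Antitone f) (hb : BddBelow (range f)) :
    (Tendsto f atTop atTop ∨ ∃ L, Tendsto f atTop (𝓝 L)) ∧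
      (Tendsto f atBot atTop ∨ ∃ L, Tendsto f atBot (𝓝 L)) := by
  rcases hf with hmono | hanti
  · exact ⟨tendsto_atTop_of_monotone hmono, Or.inr ⟨_, tendsto_atBot_ciInf hmono hb⟩⟩
  · exact ⟨Or.inr ⟨_, tendsto_atTop_ciInf hanti hb⟩, tendsto_atBot_of_antitone hanti⟩

theorem tendsto_add_mul_exp_neg_nhds_iff {α : Type*} {l : Filter α} {g : α → ℝ} (c : ℝ)
    {lam : ℝ} (hlam : lam ≠ 0) :
    Tendsto (fun x => c + lam * exp (-g x)) l (𝓝 c) ↔ Tendsto g l atTop := by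
  calc Tendsto (fun x => c + lam * exp (-g x)) l (𝓝 c)
      ↔ Tendsto (fun x => lam * exp (-g x)) l (𝓝 0) := by
        simpa only [add_zero] using tendsto_const_add_iff (l := l) (c := 0) c
    _ ↔ Tendsto (fun x => exp (-g x)) l (𝓝 0) := by
        simpa only [smul_eq_mul, mul_zero] using
          tendsto_const_smul_iff₀ (f := fun x => exp (-g x)) (l := l) (a := (0 : ℝ)) hlam
    _ ↔ Tendsto (fun x => -g x) l atBot := tendsto_exp_comp_nhds_zero
    _ ↔ Tendsto g l atTop := tendsto_neg_atBot_iff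

section Translator

variable {lam : ℝ} {z θ : ℝ → ℝ} (hz : ∀ s, HasDerivAt z (sin (θ s)) s)
  (hθ : ∀ s, HasDerivAt θ (-lam * exp (-z s) * sin (θ s)) s)
include hz hθ

theorem translator_first_integral (s : ℝ) :
    θ s - lam * exp (-z s) = θ 0 - lam * exp (-z 0) := by
  have hconst : ∀ s, HasDerivAt (fun t => θ t - lam * exp (-z t)) 0 s := fun s => by
    refine ((hθ s).sub (((hz s).fun_neg.exp).const_mul lam)).congr_deriv ?_
    ring
  exact is_const_of_deriv_eq_zero (fun t => (hconst t).differentiableAt)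
    (fun t => (hconst t).deriv) s 0

theorem translator_sin_eq (s : ℝ) :
    sin (θ s) = sin (θ 0) * exp (∫ t in (0 : ℝ)..s, -lam * exp (-z t) * cos (θ t)) := by
  have hzc : Continuous z := continuous_iff_continuousAt.mpr fun s => (hz s).continuousAt
  have hθc : Continuous θ := continuous_iff_continuousAt.mpr fun s => (hθ s).continuousAt
  refine eq_mul_exp_integral_of_hasDerivAt (a := fun t => -lam * exp (-z t) * cos (θ t))
    (by fun_prop) (fun s => ((hθ s).sin).congr_deriv ?_) s
  ring

theorem translator_monotone_or_antitone (h : sin (θ 0) ≠ 0) : Monotone z ∨ Antitone z := by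
  rcases h.lt_or_gt with hneg | hpos
  · refine Or.inr (antitone_of_hasDerivAt_nonpos hz fun s => ?_)
    rw [translator_sin_eq hz hθ s]
    exact (mul_neg_of_neg_of_pos hneg (exp_pos _)).le
  · refine Or.inl (monotone_of_hasDerivAt_nonneg hz fun s => ?_)
    rw [translator_sin_eq hz hθ s]
    exact (mul_pos hpos (exp_pos _)).le

theorem translator_bddBelow (hlam : lam ≠ 0) (h : sin (θ 0) ≠ 0) : BddBelow (range z) := by
  have hsin : ∀ s, sin (θ s) ≠ 0 := fun s => by
    rw [translator_sin_eq hz hθ s]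
    exact mul_ne_zero h (exp_ne_zero _)
  have hθc : Continuous θ := continuous_iff_continuousAt.mpr fun s => (hθ s).continuousAt
  have hlam' : 0 < |lam| := abs_pos.mpr hlam
  set M := (π + |lam| * exp (-z 0)) / |lam|
  have hexp : ∀ s, exp (-z s) ≤ M := fun s => by
    have hθs : lam * exp (-z s) = θ s - θ 0 + lam * exp (-z 0) := by
      linarith [translator_first_integral hz hθ s]
    have hband := abs_sub_lt_pi_of_sin_ne_zero hθc hsin s 0
    rw [le_div_iff₀ hlam', mul_comm]
    calc |lam| * exp (-z s) = |θ s - θ 0 + lam * exp (-z 0)| := by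
          rw [← hθs, abs_mul, abs_of_pos (exp_pos _)]
      _ ≤ |θ s - θ 0| + |lam * exp (-z 0)| := abs_add_le _ _
      _ = |θ s - θ 0| + |lam| * exp (-z 0) := by rw [abs_mul, abs_of_pos (exp_pos _)]
      _ ≤ π + |lam| * exp (-z 0) := by linarith
  have hM : 0 < M := (exp_pos _).trans_le (hexp 0)
  refine ⟨-log M, ?_⟩
  rintro _ ⟨s, rfl⟩
  linarith [(le_log_iff_exp_le hM).mpr (hexp s)]

end Translator

theorem stmt11_general
    (lam μ θ₀ : ℝ) (y z θ : ℝ → ℝ)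
    (hz0 : z 0 = 0) (hθ0 : θ 0 = θ₀)
    (hz : ∀ s : ℝ, HasDerivAt z (Real.sin (θ s)) s)
    (hθ : ∀ s : ℝ, HasDerivAt θ
      (-lam * Real.exp (-z s) * Real.sin (θ s) +
        μ * (Real.cos (θ s) - y s * Real.exp (-z s) * Real.sin (θ s))) s)
    (hμ : μ = 0) (hlam : lam ≠ 0)
    (hne : μ * Real.cos θ₀ - (θ₀ - θ₀ + lam) * Real.sin θ₀ ≠ 0) :
    (∃ m : ℝ, ∀ s : ℝ, m ≤ z s) ∧
    (Tendsto z atTop atTop ↔ Tendsto θ atTop (𝓝 (θ₀ - lam))) ∧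
    (¬ Tendsto θ atTop (𝓝 (θ₀ - lam)) → ∃ L : ℝ, Tendsto z atTop (𝓝 L)) ∧
    (Tendsto z atBot atTop ↔ Tendsto θ atBot (𝓝 (θ₀ - lam))) ∧
    (¬ Tendsto θ atBot (𝓝 (θ₀ - lam)) → ∃ L : ℝ, Tendsto z atBot (𝓝 L)) := by
  subst hμ
  simp only [zero_mul, add_zero] at hθ
  have hsin : sin (θ 0) ≠ 0 := by
    rw [hθ0]
    simpa [hlam] using hne
  have hθ_eq : θ = fun s => θ₀ - lam + lam * exp (-z s) := funext fun s => by
    have h := translator_first_integral hz hθ s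
    rw [hz0, hθ0, neg_zero, exp_zero, mul_one] at h
    linarith
  have hlim : ∀ l, Tendsto z l atTop ↔ Tendsto θ l (𝓝 (θ₀ - lam)) := fun l => by
    rw [hθ_eq]
    exact (tendsto_add_mul_exp_neg_nhds_iff _ hlam).symm
  have hbdd := translator_bddBelow hz hθ hlam hsin
  obtain ⟨hTop, hBot⟩ := tendsto_atTop_or_exists_tendsto_nhds_of_bddBelow
    (translator_monotone_or_antitone hz hθ hsin) hbdd
  obtain ⟨m, hm⟩ := hbdd
  exact ⟨⟨m, fun s => hm ⟨s, rfl⟩⟩, hlim atTop, fun h => hTop.resolve_left (mt (hlim _).mp h),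
    hlim atBot, fun h => hBot.resolve_left (mt (hlim _).mp h)⟩

theorem stmt11
    (lam μ θ₀ : ℝ) (y z θ : ℝ → ℝ)
    (hy0 : y 0 = 0) (hz0 : z 0 = 0) (hθ0 : θ 0 = θ₀)
    (hy : ∀ s : ℝ, HasDerivAt y (Real.exp (z s) * Real.cos (θ s)) s)
    (hz : ∀ s : ℝ, HasDerivAt z (Real.sin (θ s)) s)
    (hθ : ∀ s : ℝ, HasDerivAt θ
      (-lam * Real.exp (-z s) * Real.sin (θ s) +
        μ * (Real.cos (θ s) - y s * Real.exp (-z s) * Real.sin (θ s))) s)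
    (hμ : μ = 0) (hlam : lam ≠ 0)
    (hne : μ * Real.cos θ₀ - (θ₀ - θ₀ + lam) * Real.sin θ₀ ≠ 0) :
    (∃ m : ℝ, ∀ s : ℝ, m ≤ z s) ∧
    (Tendsto z atTop atTop ↔ Tendsto θ atTop (𝓝 (θ₀ - lam))) ∧
    (¬ Tendsto θ atTop (𝓝 (θ₀ - lam)) → ∃ L : ℝ, Tendsto z atTop (𝓝 L)) ∧
    (Tendsto z atBot atTop ↔ Tendsto θ atBot (𝓝 (θ₀ - lam))) ∧
    (¬ Tendsto θ atBot (𝓝 (θ₀ - lam)) → ∃ L : ℝ, Tendsto z atBot (𝓝 L)) :=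
  stmt11_general lam μ θ₀ y z θ hz0 hθ0 hz hθ hμ hlam hne
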